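/- Fix an infinite cardinal λ and a family (A_i)_{i<λ} of special subtrees of λ^{<ω} that are pairwise non-back-and-forth-equivalent. For u ⊆ λ, let T_u be the tree of height 1 with a root, one distinguished leaf a, and a node s_i for each i ∈ u, all immediate successors of the root; and let S_u be the rooted tree obtained from T_u by attaching, for each i ∈ u, a disjoint copy of A_i whose root is identified with s_i. A λ-colored tree on λ is a structure M = (λ^{<ω}, ⊴, (P_j^M)_{j<λ}) with each P_j^M ⊆ λ^{<ω}. For such M and η ∈ λ^{<ω}, let V_M(η) := {j < λ : η ∈ P_j^M}, and let f(M) := T₀*(S_{V_M(η)} : η ∈ T₀), where T₀ = λ^{<ω}. Then: (i) for every λ-colored tree M on λ, the partial order f(M) is isomorphic to a subtree of λ^{<ω}; and (ii) for all λ-colored trees M, N on λ: M ≡∞ℵ₀ N if and only if f(M) ≡∞ℵ₀ f(N) (as structures with the order alone). -/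

import Mathlib

noncomputable section

/-- a finite partial map (given by its graph `p`) between structures each with a
single binary relation is a partial isomorphism if it is functional, injective,
and preserves and reflects the relation. -/
def IsPartialIso {M N : Type*} (r : M → M → Prop) (s : N → N → Prop)
    (p : Finset (M × N)) : Prop :=
  (∀ x y y', (x, y) ∈ p → (x, y') ∈ p → y = y') ∧
  (∀ x x' y, (x, y) ∈ p → (x', y) ∈ p → x = x') ∧
  (∀ x y x' y', (x, y) ∈ p → (x', y') ∈ p → (r x x' ↔ s y y'))

/-- back-and-forth equivalence (`≡∞ℵ₀`) of two structures, each consisting of a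
single binary relation: a nonempty family of finite partial isomorphisms with the
back-and-forth extension property. -/
def BackForth {M N : Type*} (r : M → M → Prop) (s : N → N → Prop) : Prop :=
  ∃ F : Set (Finset (M × N)), F.Nonempty ∧
    (∀ p ∈ F, IsPartialIso r s p) ∧
    ∀ p ∈ F, ∀ a : M, ∀ b : N,
      ∃ q ∈ F, p ⊆ q ∧ (∃ b', (a, b') ∈ q) ∧ (∃ a', (a', b) ∈ q)

/-- a subtree of `λ^{<ω}`: a nonempty set of finite sequences closed under
initial segments -/
def IsSubtree {lam : Type*} (T : Set (List lam)) : Prop :=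
  T.Nonempty ∧ ∀ l ∈ T, ∀ l', l' <+: l → l' ∈ T

/-- `η` is contained in a branch of `T`: some `ν ∈ λ^ω` extends `η` with all its
finite restrictions in `T`. -/
def InBranch {lam : Type*} (T : Set (List lam)) (η : List lam) : Prop :=
  ∃ ν : ℕ → lam, (∀ n : ℕ, (List.ofFn fun i : Fin n => ν i) ∈ T) ∧
    η = List.ofFn fun i : Fin η.length => ν i

/-- `T` is special: for every `η ∈ T` contained in a branch, every immediate
successor of `η` in `T` has a proper extension in `T`. -/
def IsSpecial {lam : Type*} (T : Set (List lam)) : Prop :=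
  ∀ η ∈ T, InBranch T η →
    ∀ ν ∈ T, η <+: ν → ν.length = η.length + 1 →
      ∃ ρ ∈ T, ν <+: ρ ∧ ν ≠ ρ

/-- back-and-forth equivalence of two colored trees on `λ^{<ω}` (with colors indexed
by `ι`): a nonempty family of finite partial maps, functional and injective, preserving
and reflecting the initial-segment relation and all the colors, with the back-and-forth
extension property. -/
def ColBackForth {lam ι : Type*} (P Q : ι → Set (List lam)) : Prop :=
  ∃ F : Set (Finset (List lam × List lam)), F.Nonempty ∧
    (∀ p ∈ F,
      (∀ x y y', (x, y) ∈ p → (x, y') ∈ p → y = y') ∧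
      (∀ x x' y, (x, y) ∈ p → (x', y) ∈ p → x = x') ∧
      (∀ x y x' y', (x, y) ∈ p → (x', y') ∈ p → (x <+: x' ↔ y <+: y')) ∧
      (∀ x y, (x, y) ∈ p → ∀ j : ι, x ∈ P j ↔ y ∈ Q j)) ∧
    ∀ p ∈ F, ∀ a b : List lam,
      ∃ q ∈ F, p ⊆ q ∧ (∃ b', (a, b') ∈ q) ∧ (∃ a', (a', b) ∈ q)

/-- `V_M(η) = {j < λ : η ∈ P_j}` -/
def colorSet {lam : Type*} (P : lam → Set (List lam)) (η : List lam) : Set lam :=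
  {j | η ∈ P j}

/-- the universe of the attached tree `f(M) = T₀*(S_{V(η)} : η ∈ T₀)`, `T₀ = λ^{<ω}`,
where for `u ⊆ λ` the rooted tree `S_u` has, besides its root: a distinguished leaf
(encoded `Sum.inl ()`), and for each `i ∈ u` a copy of the special subtree `A i`
whose root is identified with the node `s_i` (its nodes encoded as pairs `(i, s)`
with `s ∈ A i`). So an element is either a node `η ∈ T₀`, or a pair `(η, z)` where
`z` is a non-root node of the copy of `S_{V(η)}` attached at `η`. -/
def AttachCar (lam : Type*) (A : lam → Set (List lam)) (V : List lam → Set lam) :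
    Type _ :=
  {x : List lam ⊕ (List lam × (Unit ⊕ lam × List lam)) //
    ∀ η i s, x = Sum.inr (η, Sum.inr (i, s)) → i ∈ V η ∧ s ∈ A i}

/-- the order of the attached tree: on `T₀` it is the initial segment relation;
a node of `T₀` is below a non-root node of `S_{V(ν)}` iff it is `⊴ ν`; within an
attached part the leaf `a` is comparable only with itself, and `(i, s) ≤ (j, t)`
iff `i = j` and `s ⊴ t` (inside the copy of `A i`). -/
def AttachLe {lam : Type*} (x y : List lam ⊕ (List lam × (Unit ⊕ lam × List lam))) :
    Prop :=
  (∃ η ν, x = Sum.inl η ∧ y = Sum.inl ν ∧ η <+: ν) ∨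
  (∃ η ν z, x = Sum.inl η ∧ y = Sum.inr (ν, z) ∧ η <+: ν) ∨
  (∃ η, x = Sum.inr (η, Sum.inl ()) ∧ y = Sum.inr (η, Sum.inl ())) ∨
  (∃ η i s t, x = Sum.inr (η, Sum.inr (i, s)) ∧ y = Sum.inr (η, Sum.inr (i, t)) ∧
    s <+: t)

/-!
Part (i): a node of `f(M)` is a node `η` of `T₀` followed by a node of `S_{V(η)}`. Spelling `η`
with letters `inl a` and the part in `S_{V(η)}` behind one extra letter (`inr none` for the leaf,
`inr (some i)` for the root of the copy of `A_i`) embeds `f(M)` into `(λ ⊕ Option λ)^{<ω}`, hence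
into `λ^{<ω}`, with prefix-closed image.

Part (ii): a back-and-forth system between the colored trees lifts to `f(M)`, `f(N)` by copying
the attached parts verbatim. Conversely, the nodes of `T₀` are definable in `f(M)` (`IsTrunkLike`),
so a back-and-forth system between `f(M)` and `f(N)` restricts to `T₀`, and it preserves colors:
the immediate successors of `η ∈ T₀` outside `T₀` are its leaf and the roots of the copies of
`A_j`, `j ∈ V(η)`; matched roots carry back-and-forth equivalent copies, which forces equal
indices.
-/

open List Sum

theorem List.prefix_append_iff {α : Type*} {l a t : List α} :
    l <+: a ++ t ↔ l <+: a ∨ ∃ t', t' <+: t ∧ l = a ++ t' := by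
  constructor
  · rintro ⟨u, hu⟩
    rcases List.append_eq_append_iff.1 hu with ⟨a', rfl, -⟩ | ⟨c', rfl, ht⟩
    · exact Or.inl (prefix_append _ _)
    · exact Or.inr ⟨c', ⟨u, ht.symm⟩, rfl⟩
  · rintro (h | ⟨t', ht, rfl⟩)
    · exact h.trans (prefix_append _ _)
    · exact (prefix_append_right_inj a).2 ht

theorem List.map_inl_append_prefix_iff {α β : Type*} {η₁ η₂ : List α}
    {t₁ t₂ : List (α ⊕ β)} (h₁ : ∀ a, t₁.head? ≠ some (inl a))
    (h₂ : ∀ a, t₂.head? ≠ some (inl a)) :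
    η₁.map inl ++ t₁ <+: η₂.map inl ++ t₂ ↔ (t₁ = [] ∧ η₁ <+: η₂) ∨ (η₁ = η₂ ∧ t₁ <+: t₂) := by
  induction η₁ generalizing η₂ with
  | nil =>
    cases η₂ with
    | nil => simp only [map_nil, nil_append, nil_prefix, and_true, true_and]; grind
    | cons b η₂ =>
      cases t₁ with
      | nil => simp
      | cons c t₁ => simpa using fun h _ => h₁ b (by simp [h])
  | cons a η₁ ih =>
    cases η₂ with
    | nil =>
      cases t₂ with
      | nil => simp
      | cons c t₂ => simpa using fun h _ => h₂ a (by simp [h])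
    | cons b η₂ => simp [cons_prefix_cons, ih, and_or_left, and_left_comm, and_assoc]

section Branch

variable {α : Type*} {T : Set (List α)}

theorem inBranch_of_prefix_chain (hT : IsSubtree T) (f : ℕ → List α) (hf : ∀ n, f n ∈ T)
    (hmono : ∀ n, f n <+: f (n + 1)) (hlen : ∀ n, n ≤ (f n).length) : InBranch T (f 0) := by
  have hle {m n : ℕ} (h : m ≤ n) : f m <+: f n :=
    Nat.rel_of_forall_rel_succ_of_le (· <+: ·) hmono h
  let ν (k : ℕ) : α := (f (k + 1))[k]'(Nat.lt_of_lt_of_le (Nat.lt_succ_self k) (hlen (k + 1)))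
  have hν (n : ℕ) : (List.ofFn fun i : Fin n => ν i) = (f n).take n := by
    refine List.ext_getElem (by simp [hlen n]) fun k hk _ => ?_
    rw [List.length_ofFn] at hk
    simp only [List.getElem_ofFn, List.getElem_take]
    exact (hle hk).getElem _
  refine ⟨ν, fun n => hν n ▸ hT.2 _ (hf n) _ (List.take_prefix _ _), ?_⟩
  rw [hν]
  exact List.prefix_iff_eq_take.1 (hle (Nat.zero_le _))

theorem inBranch_of_not_acc (hT : IsSubtree T) {s : List α} (hs : s ∈ T)
    (h : ¬ Acc (fun t' t => t' ∈ T ∧ t <+: t' ∧ t ≠ t') s) : InBranch T s := by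
  obtain ⟨f, rfl, hf⟩ := not_acc_iff_exists_descending_chain.1 h
  refine inBranch_of_prefix_chain hT f (fun n => ?_) (fun n => (hf n).2.1) fun n => ?_
  · cases n with
    | zero => exact hs
    | succ n => exact (hf n).1
  · induction n with
    | zero => exact Nat.zero_le _
    | succ n ih =>
      obtain ⟨-, hpre, hne⟩ := hf n
      exact lt_of_le_of_lt ih (lt_of_le_of_ne hpre.length_le (mt hpre.eq_of_length hne))

end Branch

theorem Acc.of_simulation {α β : Type*} {r : α → α → Prop} {s : β → β → Prop}
    (R : α → β → Prop) (hR : ∀ a b a', R a b → r a' a → ∃ b', R a' b' ∧ s b' b) {b : β}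
    (hb : Acc s b) : ∀ a, R a b → Acc r a := by
  induction hb with
  | intro b _ ih =>
    refine fun a hab => ⟨a, fun a' ha' => ?_⟩
    obtain ⟨b', hab', hb'⟩ := hR a b a' hab ha'
    exact ih b' hb' a' hab'

section BackAndForth

variable {M N M' N' : Type*} {r : M → M → Prop} {s : N → N → Prop}

def HasBackAndForth (F : Set (Finset (M × N))) : Prop :=
  ∀ p ∈ F, ∀ a b, ∃ q ∈ F, p ⊆ q ∧ (∃ b', (a, b') ∈ q) ∧ ∃ a', (a', b) ∈ q

def IsBFSystem (r : M → M → Prop) (s : N → N → Prop) (F : Set (Finset (M × N))) : Prop :=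
  (∀ p ∈ F, IsPartialIso r s p) ∧ HasBackAndForth F

theorem backForth_iff : BackForth r s ↔ ∃ F, F.Nonempty ∧ IsBFSystem r s F := Iff.rfl

theorem isPartialIso_of_forall {p : Finset (M × N)}
    (h : ∀ x y x' y', (x, y) ∈ p → (x', y') ∈ p → (x = x' ↔ y = y') ∧ (r x x' ↔ s y y')) :
    IsPartialIso r s p :=
  ⟨fun x y y' h₁ h₂ => (h x y x y' h₁ h₂).1.1 rfl, fun x x' y h₁ h₂ => (h x y x' y h₁ h₂).1.2 rfl,
    fun x y x' y' h₁ h₂ => (h x y x' y' h₁ h₂).2⟩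

namespace IsPartialIso

variable {p : Finset (M × N)} (h : IsPartialIso r s p) {x x' : M} {y y' : N}
  (hxy : (x, y) ∈ p) (hxy' : (x', y') ∈ p)
include h hxy hxy'

theorem eq_iff : x = x' ↔ y = y' :=
  ⟨fun e => h.1 x y y' hxy (e ▸ hxy'), fun e => h.2.1 x x' y hxy (e ▸ hxy')⟩

theorem rel_iff : r x x' ↔ s y y' := h.2.2 x y x' y' hxy hxy'

end IsPartialIso

def liftSystem (F : Set (Finset (M × N))) (R : Finset (M × N) → M' → N' → Prop) :
    Set (Finset (M' × N')) :=
  {q | ∃ p ∈ F, ∀ u ∈ q, R p u.1 u.2}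

theorem hasBackAndForth_liftSystem {F : Set (Finset (M × N))} {R : Finset (M × N) → M' → N' → Prop}
    (hmono : ∀ p q, p ⊆ q → ∀ a b, R p a b → R q a b)
    (hforth : ∀ p ∈ F, ∀ a, ∃ q ∈ F, p ⊆ q ∧ ∃ b, R q a b)
    (hback : ∀ p ∈ F, ∀ b, ∃ q ∈ F, p ⊆ q ∧ ∃ a, R q a b) :
    HasBackAndForth (liftSystem F R) := by
  classical
  rintro r ⟨p, hp, hr⟩ a b
  obtain ⟨q, hq, hpq, b', hab'⟩ := hforth p hp a
  obtain ⟨q', hq', hqq', a', ha'b⟩ := hback q hq b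
  refine ⟨insert (a, b') (insert (a', b) r), ⟨q', hq', ?_⟩,
    (Finset.subset_insert _ _).trans (Finset.subset_insert _ _), ⟨b', by simp⟩, ⟨a', by simp⟩⟩
  simp only [Finset.mem_insert, forall_eq_or_imp]
  exact ⟨hmono _ _ hqq' _ _ hab', ha'b, fun u hu => hmono _ _ (hpq.trans hqq') _ _ (hr u hu)⟩

theorem backForth_of_liftSystem {r' : M' → M' → Prop} {s' : N' → N' → Prop}
    {F : Set (Finset (M × N))} (hF : F.Nonempty) (R : Finset (M × N) → M' → N' → Prop)
    (hmono : ∀ p q, p ⊆ q → ∀ a b, R p a b → R q a b)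
    (hforth : ∀ p ∈ F, ∀ a, ∃ q ∈ F, p ⊆ q ∧ ∃ b, R q a b)
    (hback : ∀ p ∈ F, ∀ b, ∃ q ∈ F, p ⊆ q ∧ ∃ a, R q a b)
    (hcompat : ∀ p ∈ F, ∀ x y x' y', R p x y → R p x' y' →
      (x = x' ↔ y = y') ∧ (r' x x' ↔ s' y y')) :
    BackForth r' s' := by
  obtain ⟨p₀, hp₀⟩ := hF
  refine ⟨liftSystem F R, ⟨∅, p₀, hp₀, by simp⟩, ?_,
    hasBackAndForth_liftSystem hmono hforth hback⟩
  rintro q ⟨p, hp, hq⟩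
  exact isPartialIso_of_forall fun x y x' y' hxy hxy' =>
    hcompat p hp x y x' y' (hq _ hxy) (hq _ hxy')

def swapPairs (p : Finset (M × N)) : Finset (N × M) :=
  p.map (Equiv.prodComm M N).toEmbedding

@[simp] theorem mem_swapPairs {p : Finset (M × N)} {a : M} {b : N} :
    (b, a) ∈ swapPairs p ↔ (a, b) ∈ p := by
  simp [swapPairs, Finset.mem_map_equiv]

theorem IsBFSystem.swap {F : Set (Finset (M × N))} (hF : IsBFSystem r s F) :
    IsBFSystem s r (swapPairs '' F) := by
  constructor
  · rintro _ ⟨p, hp, rfl⟩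
    exact isPartialIso_of_forall fun y x y' x' h h' =>
      ⟨((hF.1 p hp).eq_iff (mem_swapPairs.1 h) (mem_swapPairs.1 h')).symm,
        ((hF.1 p hp).rel_iff (mem_swapPairs.1 h) (mem_swapPairs.1 h')).symm⟩
  · rintro _ ⟨p, hp, rfl⟩ b a
    obtain ⟨q, hq, hpq, ⟨b', hab'⟩, a', ha'b⟩ := hF.2 p hp a b
    exact ⟨swapPairs q, ⟨q, hq, rfl⟩, Finset.map_subset_map.2 hpq, ⟨a', mem_swapPairs.2 ha'b⟩,
      b', mem_swapPairs.2 hab'⟩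

theorem backForth_of_subsingleton {M N : Type*} [Subsingleton M] [Subsingleton N]
    {r : M → M → Prop} {s : N → N → Prop} (a : M) (b : N) (h : r a a ↔ s b b) :
    BackForth r s := by
  refine ⟨{{(a, b)}}, ⟨_, rfl⟩, ?_, ?_⟩
  · rintro p rfl
    refine isPartialIso_of_forall fun x y x' y' _ _ => ?_
    rw [Subsingleton.elim x a, Subsingleton.elim x' a, Subsingleton.elim y b,
      Subsingleton.elim y' b]
    exact ⟨iff_of_true rfl rfl, h⟩
  · rintro p rfl a' b'
    exact ⟨_, rfl, subset_rfl, ⟨b, by simp [Subsingleton.elim a' a]⟩, a,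
      by simp [Subsingleton.elim b' b]⟩

end BackAndForth

section PreorderInvariants

variable {M N : Type*} [Preorder M] [Preorder N]

/-- In `f(M)` these are exactly the nodes of `T₀`: a leaf lies on no infinite chain, and a node of
a copy of `A_i` that does lies on a branch of `A_i`, so by specialness it has no maximal immediate
successor. -/
def IsTrunkLike (x : M) : Prop :=
  ¬ Acc (· > ·) x ∧ ∃ y, x ⋖ y ∧ IsMax y

namespace IsBFSystem

variable {F : Set (Finset (M × N))} (hF : IsBFSystem (· ≤ ·) (· ≤ ·) F) {p : Finset (M × N)}
  (hp : p ∈ F) {x x' : M} {y y' : N} (hxy : (x, y) ∈ p)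
include hF hp hxy

theorem lt_iff (hxy' : (x', y') ∈ p) : x < x' ↔ y < y' := by
  simp only [lt_iff_le_not_ge, (hF.1 p hp).rel_iff hxy hxy', (hF.1 p hp).rel_iff hxy' hxy]

theorem isMax (hx : IsMax x) : IsMax y := by
  intro z hyz
  obtain ⟨q, hq, hpq, -, w, hwz⟩ := hF.2 p hp x z
  have hI := hF.1 q hq
  exact (hI.rel_iff hwz (hpq hxy)).1 (hx ((hI.rel_iff (hpq hxy) hwz).2 hyz))

theorem covBy (hxy' : (x', y') ∈ p) (h : x ⋖ x') : y ⋖ y' := by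
  refine ⟨(hF.lt_iff hp hxy hxy').1 h.1, fun z hyz hzy' => ?_⟩
  obtain ⟨q, hq, hpq, -, w, hwz⟩ := hF.2 p hp x z
  exact h.2 ((hF.lt_iff hq (hpq hxy) hwz).2 hyz) ((hF.lt_iff hq hwz (hpq hxy')).2 hzy')

theorem acc (hy : Acc (· > ·) y) : Acc (· > ·) x := by
  refine Acc.of_simulation (fun a b => ∃ q ∈ F, (a, b) ∈ q) ?_ hy x ⟨p, hp, hxy⟩
  rintro a b a' ⟨q, hq, hab⟩ ha'
  obtain ⟨q', hq', hqq', ⟨b', hab'⟩, -⟩ := hF.2 q hq a' b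
  exact ⟨b', ⟨q', hq', hab'⟩, (hF.lt_iff hq' (hqq' hab) hab').1 ha'⟩

theorem isTrunkLike (h : IsTrunkLike x) : IsTrunkLike y := by
  obtain ⟨hx, m, hm, hmax⟩ := h
  obtain ⟨q, hq, hpq, ⟨m', hmm'⟩, -⟩ := hF.2 p hp m y
  exact ⟨mt (hF.acc hp hxy) hx, m', hF.covBy hq (hpq hxy) hmm' hm, hF.isMax hq hmm' hmax⟩

theorem isMax_iff : IsMax x ↔ IsMax y :=
  ⟨hF.isMax hp hxy, hF.swap.isMax ⟨p, hp, rfl⟩ (mem_swapPairs.2 hxy)⟩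

theorem isTrunkLike_iff : IsTrunkLike x ↔ IsTrunkLike y :=
  ⟨hF.isTrunkLike hp hxy, hF.swap.isTrunkLike ⟨p, hp, rfl⟩ (mem_swapPairs.2 hxy)⟩

end IsBFSystem

theorem IsMax.acc {x : M} (hx : IsMax x) : Acc (· > ·) x :=
  ⟨x, fun _ hy => (hy.not_ge (hx hy.le)).elim⟩

end PreorderInvariants

abbrev AttachNode (lam : Type*) := List lam ⊕ (List lam × (Unit ⊕ lam × List lam))

namespace AttachNode

variable {lam : Type*}

/-- A node of `f(M)` is given by its `base` `η ∈ T₀` and its `fiber`, a node of `S_{V(η)}`, with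
`none` standing for the root of `S_{V(η)}`, which is identified with `η`. -/
def base : AttachNode lam → List lam
  | inl η => η
  | inr (η, _) => η

def fiber : AttachNode lam → Option (Unit ⊕ lam × List lam)
  | inl _ => none
  | inr (_, z) => some z

def ofBaseFiber (η : List lam) : Option (Unit ⊕ lam × List lam) → AttachNode lam
  | none => inl η
  | some z => inr (η, z)

@[simp] theorem base_ofBaseFiber (η : List lam) (z : Option (Unit ⊕ lam × List lam)) :
    base (ofBaseFiber η z) = η := by
  cases z <;> rfl

@[simp] theorem fiber_ofBaseFiber (η : List lam) (z : Option (Unit ⊕ lam × List lam)) :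
    fiber (ofBaseFiber η z) = z := by
  cases z <;> rfl

theorem eq_iff_base_fiber {x y : AttachNode lam} : x = y ↔ base x = base y ∧ fiber x = fiber y := by
  rcases x with η | ⟨η, z⟩ <;> rcases y with ν | ⟨ν, w⟩ <;> simp [base, fiber]

/-- The order of `S_u`. -/
def FiberLe : Option (Unit ⊕ lam × List lam) → Option (Unit ⊕ lam × List lam) → Prop
  | none, _ => True
  | some (inl _), some (inl _) => True
  | some (inr (i, s)), some (inr (j, t)) => i = j ∧ s <+: t
  | some _, _ => False

theorem FiberLe.refl (z : Option (Unit ⊕ lam × List lam)) : FiberLe z z := by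
  rcases z with _ | _ | _ <;> simp [FiberLe]

theorem eq_none_of_fiberLe_none {z : Option (Unit ⊕ lam × List lam)} (h : FiberLe z none) :
    z = none := by
  rcases z with _ | _ | _ <;> simp_all [FiberLe]

theorem FiberLe.trans {z₁ z₂ z₃ : Option (Unit ⊕ lam × List lam)} :
    FiberLe z₁ z₂ → FiberLe z₂ z₃ → FiberLe z₁ z₃ := by
  rcases z₁ with _ | _ | ⟨i, s⟩ <;> rcases z₂ with _ | _ | ⟨j, t⟩ <;>
    rcases z₃ with _ | _ | ⟨k, r⟩ <;> simp only [FiberLe] <;> grind [IsPrefix.trans]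

theorem FiberLe.antisymm {z₁ z₂ : Option (Unit ⊕ lam × List lam)} :
    FiberLe z₁ z₂ → FiberLe z₂ z₁ → z₁ = z₂ := by
  rcases z₁ with _ | _ | ⟨i, s⟩ <;> rcases z₂ with _ | _ | ⟨j, t⟩ <;> simp only [FiberLe] <;>
    first
    | exact fun ⟨hij, h₁⟩ ⟨_, h₂⟩ => by rw [hij, _root_.antisymm h₁ h₂]
    | simp

theorem attachLe_iff (x y : AttachNode lam) :
    AttachLe x y ↔ (fiber x = none ∧ base x <+: base y) ∨
      (base x = base y ∧ FiberLe (fiber x) (fiber y)) := by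
  rcases x with η | ⟨η, _ | ⟨i, s⟩⟩ <;> rcases y with ν | ⟨ν, _ | ⟨j, t⟩⟩ <;>
    simp [AttachLe, base, fiber, FiberLe] <;> grind

theorem prefix_and_fiberLe_of_attachLe {x y : AttachNode lam} (h : AttachLe x y) :
    base x <+: base y ∧ FiberLe (fiber x) (fiber y) := by
  rcases (attachLe_iff x y).1 h with ⟨hx, hb⟩ | ⟨hb, hf⟩
  · exact ⟨hb, by simp [hx, FiberLe]⟩
  · exact ⟨hb ▸ prefix_rfl, hf⟩

theorem attachLe_refl (x : AttachNode lam) : AttachLe x x :=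
  (attachLe_iff x x).2 (Or.inr ⟨rfl, FiberLe.refl _⟩)

theorem attachLe_trans {x y z : AttachNode lam} (hxy : AttachLe x y) (hyz : AttachLe y z) :
    AttachLe x z := by
  rw [attachLe_iff] at *
  rcases hxy with ⟨hx, h₁⟩ | ⟨h₁, h₂⟩ <;> rcases hyz with ⟨hy, h₃⟩ | ⟨h₃, h₄⟩
  · exact Or.inl ⟨hx, h₁.trans h₃⟩
  · exact Or.inl ⟨hx, h₃ ▸ h₁⟩
  · rw [hy] at h₂
    exact Or.inl ⟨eq_none_of_fiberLe_none h₂, h₁ ▸ h₃⟩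
  · exact Or.inr ⟨h₁.trans h₃, h₂.trans h₄⟩

theorem attachLe_antisymm {x y : AttachNode lam} (hxy : AttachLe x y) (hyx : AttachLe y x) :
    x = y := by
  obtain ⟨hb, hf⟩ := prefix_and_fiberLe_of_attachLe hxy
  obtain ⟨hb', hf'⟩ := prefix_and_fiberLe_of_attachLe hyx
  exact eq_iff_base_fiber.2 ⟨_root_.antisymm hb hb', hf.antisymm hf'⟩

def fiberCode : Option (Unit ⊕ lam × List lam) → List (lam ⊕ Option lam)
  | none => []
  | some (inl _) => [inr none]
  | some (inr (i, s)) => inr (some i) :: s.map inl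

def code (x : AttachNode lam) : List (lam ⊕ Option lam) :=
  (base x).map inl ++ fiberCode (fiber x)

theorem fiberCode_head?_ne (z : Option (Unit ⊕ lam × List lam)) (a : lam) :
    (fiberCode z).head? ≠ some (inl a) := by
  rcases z with _ | _ | _ <;> simp [fiberCode]

theorem fiberCode_eq_nil_iff {z : Option (Unit ⊕ lam × List lam)} :
    fiberCode z = [] ↔ z = none := by
  rcases z with _ | _ | _ <;> simp [fiberCode]

theorem fiberCode_prefix_iff {z z' : Option (Unit ⊕ lam × List lam)} :
    fiberCode z <+: fiberCode z' ↔ FiberLe z z' := by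
  rcases z with _ | _ | ⟨i, s⟩ <;> rcases z' with _ | _ | ⟨j, t⟩ <;>
    simp [fiberCode, FiberLe, prefix_map_iff_of_injective inl_injective]

theorem exists_fiberCode_eq_of_prefix {w : List (lam ⊕ Option lam)}
    {z : Option (Unit ⊕ lam × List lam)} (h : w <+: fiberCode z) :
    ∃ z', FiberLe z' z ∧ fiberCode z' = w := by
  rcases z with _ | _ | ⟨i, s⟩
  · exact ⟨none, trivial, (prefix_nil.1 h).symm⟩
  · rcases prefix_cons_iff.1 h with rfl | ⟨t, rfl, ht⟩
    · exact ⟨none, trivial, rfl⟩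
    · exact ⟨some (inl ()), trivial, by rw [prefix_nil.1 ht]; rfl⟩
  · rcases prefix_cons_iff.1 h with rfl | ⟨t, rfl, ht⟩
    · exact ⟨none, trivial, rfl⟩
    · obtain ⟨s', hs', rfl⟩ := prefix_map_iff.1 ht
      exact ⟨some (inr (i, s')), ⟨rfl, hs'⟩, rfl⟩

theorem code_prefix_iff {x y : AttachNode lam} : code x <+: code y ↔ AttachLe x y := by
  rw [code, code, map_inl_append_prefix_iff (fiberCode_head?_ne _) (fiberCode_head?_ne _),
    fiberCode_eq_nil_iff, fiberCode_prefix_iff, attachLe_iff]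

theorem exists_code_eq_of_prefix {l : List (lam ⊕ Option lam)} {x : AttachNode lam}
    (h : l <+: code x) : ∃ y, AttachLe y x ∧ code y = l := by
  rcases prefix_append_iff.1 h with h | ⟨w, hw, rfl⟩
  · obtain ⟨η, hη, rfl⟩ := prefix_map_iff.1 h
    exact ⟨inl η, (attachLe_iff _ _).2 (Or.inl ⟨rfl, hη⟩), by simp [code, base, fiber, fiberCode]⟩
  · obtain ⟨z, hz, rfl⟩ := exists_fiberCode_eq_of_prefix hw
    exact ⟨ofBaseFiber (base x) z, (attachLe_iff _ _).2 (Or.inr (by simpa using hz)),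
      by simp [code]⟩

end AttachNode

theorem nonempty_sum_option_embedding (lam : Type*) [Infinite lam] :
    Nonempty (lam ⊕ Option lam ↪ lam) := by
  rw [← Cardinal.le_def]
  simp [Cardinal.mk_option, Cardinal.add_eq_self, Cardinal.aleph0_le_mk]

namespace AttachCar

open AttachNode

variable {lam : Type*} {A : lam → Set (List lam)} {V : List lam → Set lam}

instance : PartialOrder (AttachCar lam A V) where
  le x y := AttachLe x.1 y.1
  le_refl x := attachLe_refl x.1
  le_trans _ _ _ := attachLe_trans
  le_antisymm _ _ hxy hyx := Subtype.ext (attachLe_antisymm hxy hyx)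

theorem ext_iff {x y : AttachCar lam A V} : x = y ↔ x.1 = y.1 := Subtype.ext_iff

theorem le_def {x y : AttachCar lam A V} : x ≤ y ↔ AttachLe x.1 y.1 := Iff.rfl

def trunk (η : List lam) : AttachCar lam A V := ⟨inl η, by simp⟩

def leaf (η : List lam) : AttachCar lam A V := ⟨inr (η, inl ()), by simp⟩

def node (η : List lam) (i : lam) (s : List lam) (hi : i ∈ V η) (hs : s ∈ A i) :
    AttachCar lam A V :=
  ⟨inr (η, inr (i, s)), by rintro _ _ _ ⟨⟩; exact ⟨hi, hs⟩⟩

@[elab_as_elim, induction_eliminator]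
theorem ind {motive : AttachCar lam A V → Prop} (trunk : ∀ η, motive (trunk η))
    (leaf : ∀ η, motive (leaf η)) (node : ∀ η i s hi hs, motive (node η i s hi hs))
    (x : AttachCar lam A V) : motive x := by
  obtain ⟨η | ⟨η, _ | ⟨i, s⟩⟩, hx⟩ := x
  · exact trunk η
  · exact leaf η
  · obtain ⟨hi, hs⟩ := hx η i s rfl
    exact node η i s hi hs

section Order

variable {η ν : List lam} {i j : lam} {s t : List lam} {hi : i ∈ V η} {hs : s ∈ A i}
  {hj : j ∈ V ν} {ht : t ∈ A j}

@[simp] theorem trunk_le_trunk : (trunk η : AttachCar lam A V) ≤ trunk ν ↔ η <+: ν := by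
  rw [le_def]; simp [AttachLe, trunk]

@[simp] theorem trunk_le_leaf : (trunk η : AttachCar lam A V) ≤ leaf ν ↔ η <+: ν := by
  rw [le_def]; simp [AttachLe, trunk, leaf]

@[simp] theorem trunk_le_node : (trunk η : AttachCar lam A V) ≤ node ν j t hj ht ↔ η <+: ν := by
  rw [le_def]; simp [AttachLe, trunk, node]

@[simp] theorem leaf_le_iff {y : AttachCar lam A V} : leaf η ≤ y ↔ y = leaf η := by
  rw [le_def, ext_iff]
  induction y <;> simp [AttachLe, trunk, leaf, node, eq_comm]

@[simp] theorem node_le_node :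
    (node η i s hi hs : AttachCar lam A V) ≤ node ν j t hj ht ↔ η = ν ∧ i = j ∧ s <+: t := by
  rw [le_def]; simp [AttachLe, node, eq_comm, and_assoc]

theorem node_le_iff {y : AttachCar lam A V} :
    node η i s hi hs ≤ y ↔ ∃ t ht, s <+: t ∧ y = node η i t hi ht := by
  induction y <;> rw [le_def] <;> simp [AttachLe, trunk, leaf, node] <;> grind

@[simp] theorem trunk_inj : (trunk η : AttachCar lam A V) = trunk ν ↔ η = ν := by
  rw [ext_iff]; simp [trunk]

@[simp] theorem trunk_ne_leaf : (trunk η : AttachCar lam A V) ≠ leaf ν := by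
  rw [Ne, ext_iff]; simp [trunk, leaf]

@[simp] theorem trunk_ne_node : (trunk η : AttachCar lam A V) ≠ node ν j t hj ht := by
  rw [Ne, ext_iff]; simp [trunk, node]

@[simp] theorem node_inj :
    (node η i s hi hs : AttachCar lam A V) = node ν j t hj ht ↔ η = ν ∧ i = j ∧ s = t := by
  rw [ext_iff]; simp [node]

@[simp] theorem leaf_ne_node : (leaf η : AttachCar lam A V) ≠ node ν j t hj ht := by
  rw [Ne, ext_iff]; simp [leaf, node]

theorem not_node_le_leaf : ¬ (node η i s hi hs : AttachCar lam A V) ≤ leaf ν := by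
  simp [node_le_iff]

theorem isMax_leaf (η : List lam) : IsMax (leaf η : AttachCar lam A V) :=
  fun _ h => (leaf_le_iff.1 h).le

theorem not_acc_trunk [Nonempty lam] (η : List lam) :
    ¬ Acc (· > ·) (trunk η : AttachCar lam A V) := by
  intro h
  generalize hx : trunk η = x at h
  induction h generalizing η with
  | intro x _ ih =>
    subst hx
    obtain ⟨a⟩ := ‹Nonempty lam›
    exact ih (trunk (η ++ [a])) (lt_of_le_of_ne (by simp) (by simp)) _ rfl

theorem trunk_covBy_leaf (η : List lam) : (trunk η : AttachCar lam A V) ⋖ leaf η := by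
  refine ⟨lt_of_le_of_ne (by simp) (by simp), fun z hz hz' => ?_⟩
  induction z with
  | trunk ρ =>
    have := _root_.antisymm (trunk_le_trunk.1 hz.le) (trunk_le_leaf.1 hz'.le)
    simp [this] at hz
  | leaf ρ => exact hz'.ne (leaf_le_iff.1 hz'.le).symm
  | node ρ k r hk hr => exact not_node_le_leaf hz'.le

theorem trunk_covBy_node_nil (η : List lam) (i : lam) (hi : i ∈ V η) (h0 : [] ∈ A i) :
    (trunk η : AttachCar lam A V) ⋖ node η i [] hi h0 := by
  refine ⟨lt_of_le_of_ne (by simp) (by simp), fun z hz hz' => ?_⟩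
  induction z with
  | trunk ρ =>
    have := _root_.antisymm (trunk_le_trunk.1 hz.le) (trunk_le_node.1 hz'.le)
    simp [this] at hz
  | leaf ρ => exact leaf_ne_node (leaf_le_iff.1 hz'.le).symm
  | node ρ k r hk hr =>
    obtain ⟨rfl, rfl, hr⟩ := node_le_node.1 hz'.le
    exact hz'.ne (by simpa using prefix_nil.1 hr)

theorem eq_of_trunk_covBy (hA : ∀ i, IsSubtree (A i)) {b : AttachCar lam A V}
    (h : trunk ν ⋖ b) : (∃ ρ, b = trunk ρ) ∨ b = leaf ν ∨ ∃ j hj h0, b = node ν j [] hj h0 := by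
  have base_eq {ρ : List lam} (hρ : trunk ρ < b) (hνρ : ν <+: ρ) : ν = ρ := by
    by_contra hne
    exact h.2 (lt_of_le_of_ne (by simpa using hνρ) (by simpa using hne)) hρ
  induction b with
  | trunk ρ => exact Or.inl ⟨ρ, rfl⟩
  | leaf ρ =>
    obtain rfl := base_eq (trunk_covBy_leaf ρ).lt (trunk_le_leaf.1 h.le)
    exact Or.inr (Or.inl rfl)
  | node ρ k r hk hr =>
    obtain rfl := base_eq (lt_of_le_of_ne (by simp) (by simp)) (trunk_le_node.1 h.le)
    have h0 : [] ∈ A k := (hA k).2 r hr [] nil_prefix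
    refine Or.inr (Or.inr ⟨k, hk, h0, ?_⟩)
    by_contra hne
    refine h.2 (trunk_covBy_node_nil ν k hk h0).lt (lt_of_le_of_ne (by simp) ?_)
    simpa [eq_comm] using hne

theorem exists_succ_of_node_covBy (hA : ∀ i, IsSubtree (A i)) {m : AttachCar lam A V}
    (h : node η i s hi hs ⋖ m) :
    ∃ u hu, m = node η i u hi hu ∧ s <+: u ∧ u.length = s.length + 1 := by
  obtain ⟨u, hu, hsu, rfl⟩ := node_le_iff.1 h.le
  have hlt : s.length < u.length :=
    lt_of_le_of_ne hsu.length_le fun e => h.lt.ne (by simp [hsu.eq_of_length e])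
  refine ⟨u, hu, rfl, hsu, le_antisymm (not_lt.1 fun hgt => ?_) hlt⟩
  have hw : u.take (s.length + 1) ∈ A i := (hA i).2 u hu _ (take_prefix _ _)
  refine h.2 (c := node η i _ hi hw) (lt_of_le_of_ne ?_ ?_) (lt_of_le_of_ne ?_ ?_)
  · exact node_le_node.2 ⟨rfl, rfl, prefix_take_iff.2 ⟨hsu, by omega⟩⟩
  · simp only [ne_eq, node_inj, true_and]
    exact fun e => by have := congrArg length e; simp at this; omega
  · exact node_le_node.2 ⟨rfl, rfl, take_prefix _ _⟩
  · simp only [ne_eq, node_inj, true_and]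
    exact fun e => by have := congrArg length e; simp at this; omega

theorem not_isTrunkLike_node (hA : ∀ i, IsSubtree (A i) ∧ IsSpecial (A i)) :
    ¬ IsTrunkLike (node η i s hi hs : AttachCar lam A V) := by
  rintro ⟨hacc, m, hm, hmax⟩
  have hbranch : InBranch (A i) s := by
    refine inBranch_of_not_acc (hA i).1 hs fun hacc' => hacc ?_
    refine Acc.of_simulation (fun x t => ∃ ht, x = node η i t hi ht) ?_ hacc' _ ⟨hs, rfl⟩
    rintro _ t x' ⟨ht, rfl⟩ hx'
    obtain ⟨t', ht', htt', rfl⟩ := node_le_iff.1 hx'.le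
    exact ⟨t', ⟨ht', rfl⟩, ht', htt', fun e => hx'.ne (by simp [e])⟩
  obtain ⟨u, hu, rfl, hsu, hlen⟩ := exists_succ_of_node_covBy (fun i => (hA i).1) hm
  obtain ⟨ρ, hρ, huρ, hne⟩ := (hA i).2 s hs hbranch u hu hsu hlen
  exact hne (_root_.antisymm huρ (node_le_node.1 (hmax (node_le_node.2 ⟨rfl, rfl, huρ⟩ :
    node η i u hi hu ≤ node η i ρ hi hρ))).2.2)

theorem isTrunkLike_iff [Nonempty lam] (hA : ∀ i, IsSubtree (A i) ∧ IsSpecial (A i))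
    {x : AttachCar lam A V} : IsTrunkLike x ↔ ∃ η, x = trunk η := by
  constructor
  · intro h
    induction x with
    | trunk η => exact ⟨η, rfl⟩
    | leaf η => exact absurd (isMax_leaf η).acc h.1
    | node η i s hi hs => exact absurd h (not_isTrunkLike_node hA)
  · rintro ⟨η, rfl⟩
    exact ⟨not_acc_trunk η, leaf η, trunk_covBy_leaf η, isMax_leaf η⟩

theorem eq_nil_of_isMax_node {h0 : [] ∈ A i} (h : IsMax (node η i [] hi h0 : AttachCar lam A V)) :
    ∀ t ∈ A i, t = [] := fun t ht =>
  prefix_nil.1 (node_le_node.1 (h (node_le_node.2 ⟨rfl, rfl, nil_prefix⟩ :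
    node η i [] hi h0 ≤ node η i t hi ht))).2.2

end Order

theorem exists_val_eq_of_attachLe (hA : ∀ i, IsSubtree (A i)) (x : AttachCar lam A V)
    {y : AttachNode lam} (h : AttachLe y x.1) : ∃ y' : AttachCar lam A V, y'.1 = y := by
  refine ⟨⟨y, ?_⟩, rfl⟩
  rintro η i s rfl
  induction x with
  | trunk => simp [AttachLe, trunk] at h
  | leaf => simp [AttachLe, leaf] at h
  | node ν j t hj ht =>
    obtain ⟨rfl, rfl, hst⟩ : η = ν ∧ i = j ∧ s <+: t := by
      simpa [AttachLe, node, eq_comm, and_assoc] using h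
    exact ⟨hj, (hA i).2 t ht s hst⟩

theorem exists_isSubtree_orderIso [Infinite lam] (hA : ∀ i, IsSubtree (A i)) :
    ∃ T : Set (List lam), IsSubtree T ∧ ∃ e : AttachCar lam A V ≃ {l // l ∈ T},
      ∀ x y : AttachCar lam A V, x ≤ y ↔ (e x).1 <+: (e y).1 := by
  obtain ⟨g⟩ := nonempty_sum_option_embedding lam
  let enc (x : AttachCar lam A V) : List lam := (code x.1).map g
  have enc_prefix_iff (x y) : enc x <+: enc y ↔ x ≤ y :=
    (prefix_map_iff_of_injective g.injective).trans code_prefix_iff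
  have enc_inj : Function.Injective enc := fun x y h =>
    le_antisymm ((enc_prefix_iff x y).1 (h ▸ prefix_rfl)) ((enc_prefix_iff y x).1 (h ▸ prefix_rfl))
  refine ⟨Set.range enc, ⟨⟨_, trunk [], rfl⟩, ?_⟩, Equiv.ofInjective enc enc_inj,
    fun x y => (enc_prefix_iff x y).symm⟩
  rintro _ ⟨x, rfl⟩ l hl
  obtain ⟨l', hl', rfl⟩ := prefix_map_iff.1 hl
  obtain ⟨y, hyx, rfl⟩ := exists_code_eq_of_prefix hl'
  obtain ⟨y', rfl⟩ := exists_val_eq_of_attachLe hA x hyx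
  exact ⟨y', rfl⟩

section Matching

variable {W : List lam → Set lam} {η ν : List lam}
  {G : Set (Finset (AttachCar lam A V × AttachCar lam A W))}
  {q : Finset (AttachCar lam A V × AttachCar lam A W)}

theorem exists_base_fiber_eq (x : AttachCar lam A V) (hV : ∀ i ∈ V (base x.1), i ∈ W ν) :
    ∃ y : AttachCar lam A W, base y.1 = ν ∧ fiber y.1 = fiber x.1 := by
  induction x with
  | trunk => exact ⟨trunk ν, rfl, rfl⟩
  | leaf => exact ⟨leaf ν, rfl, rfl⟩
  | node η i s hi hs => exact ⟨node ν i s (hV i hi) hs, rfl, rfl⟩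

section NodeMatching

variable {i j : lam} {s : List lam} {hi : i ∈ V η} {hs : s ∈ A i} {hj : j ∈ W ν}
  (hG : IsBFSystem (· ≤ ·) (· ≤ ·) G) (hq : q ∈ G)
include hG hq

theorem exists_node_of_mem {hi0 : [] ∈ A i} {hj0 : [] ∈ A j}
    (hab : (node η i [] hi hi0, node ν j [] hj hj0) ∈ q) {c : AttachCar lam A W}
    (hc : (node η i s hi hs, c) ∈ q) : ∃ t ht, c = node ν j t hj ht := by
  have : node ν j [] hj hj0 ≤ c :=
    ((hG.1 q hq).rel_iff hab hc).1 (node_le_node.2 ⟨rfl, rfl, nil_prefix⟩)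
  obtain ⟨t, ht, -, rfl⟩ := node_le_iff.1 this
  exact ⟨t, ht, rfl⟩

theorem backForth_of_mem_node_nil {hi0 : [] ∈ A i} {hj0 : [] ∈ A j}
    (hab : (node η i [] hi hi0, node ν j [] hj hj0) ∈ q) :
    BackForth (fun a b : {l : List lam // l ∈ A i} => a.1 <+: b.1)
      (fun a b : {l : List lam // l ∈ A j} => a.1 <+: b.1) := by
  refine backForth_of_liftSystem (F := {p ∈ G | (node η i [] hi hi0, node ν j [] hj hj0) ∈ p})
    ⟨q, hq, hab⟩ (fun p s t => (node η i s.1 hi s.2, node ν j t.1 hj t.2) ∈ p)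
    (fun p p' hpp' _ _ h => hpp' h) ?_ ?_ ?_
  · rintro p ⟨hp, hpab⟩ s
    obtain ⟨p', hp', hpp', ⟨c, hc⟩, -⟩ := hG.2 p hp (node η i s.1 hi s.2) (node ν j [] hj hj0)
    obtain ⟨t, ht, rfl⟩ := exists_node_of_mem hG hp' (hpp' hpab) hc
    exact ⟨p', ⟨hp', hpp' hpab⟩, hpp', ⟨t, ht⟩, hc⟩
  · rintro p ⟨hp, hpab⟩ t
    obtain ⟨p', hp', hpp', -, d, hd⟩ := hG.2 p hp (node η i [] hi hi0) (node ν j t.1 hj t.2)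
    obtain ⟨s, hs, rfl⟩ := exists_node_of_mem hG.swap ⟨p', hp', rfl⟩
      (mem_swapPairs.2 (hpp' hpab)) (mem_swapPairs.2 hd)
    exact ⟨p', ⟨hp', hpp' hpab⟩, hpp', ⟨s, hs⟩, hd⟩
  · rintro p ⟨hp, -⟩ s t s' t' h h'
    have hI := hG.1 p hp
    constructor
    · simpa [Subtype.ext_iff] using hI.eq_iff h h'
    · simpa using hI.rel_iff h h'

end NodeMatching

theorem exists_partner_of_trunk_covBy [Nonempty lam]
    (hA : ∀ i, IsSubtree (A i) ∧ IsSpecial (A i)) (hG : IsBFSystem (· ≤ ·) (· ≤ ·) G)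
    (hq : q ∈ G) (htr : (trunk η, trunk ν) ∈ q) {a : AttachCar lam A V} (ha : trunk η ⋖ a)
    (hna : ¬ IsTrunkLike a) :
    ∃ q' ∈ G, q ⊆ q' ∧ ∃ b, (a, b) ∈ q' ∧ (b = leaf ν ∨ ∃ j hj h0, b = node ν j [] hj h0) := by
  obtain ⟨q', hq', hqq', ⟨b, hab⟩, -⟩ := hG.2 q hq a (trunk ν)
  refine ⟨q', hq', hqq', b, hab, ?_⟩
  rcases eq_of_trunk_covBy (fun i => (hA i).1) (hG.covBy hq' (hqq' htr) hab ha) with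
    ⟨ρ, rfl⟩ | hb | hb
  · exact absurd ((hG.isTrunkLike_iff hq' hab).2 ((isTrunkLike_iff hA).2 ⟨ρ, rfl⟩)) hna
  · exact Or.inl hb
  · exact Or.inr hb

/-- If `A_j` is a single node, the root of its copy above `η` may be matched with the leaf above
`ν`; the leaf above `η` is then matched with the root of a single-node copy above `ν`. -/
theorem exists_backForth_of_mem [Nonempty lam] (hA : ∀ i, IsSubtree (A i) ∧ IsSpecial (A i))
    (hG : IsBFSystem (· ≤ ·) (· ≤ ·) G) (hq : q ∈ G) (htr : (trunk η, trunk ν) ∈ q) {j : lam}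
    (hj : j ∈ V η) :
    ∃ j' ∈ W ν, BackForth (fun a b : {l : List lam // l ∈ A j} => a.1 <+: b.1)
      (fun a b : {l : List lam // l ∈ A j'} => a.1 <+: b.1) := by
  have h0 (i : lam) : [] ∈ A i := (hA i).1.2 _ (hA i).1.1.some_mem [] nil_prefix
  obtain ⟨q₁, hq₁, hqq₁, b, hnb, rfl | ⟨j', hj', h0', rfl⟩⟩ :=
    exists_partner_of_trunk_covBy hA hG hq htr (trunk_covBy_node_nil η j hj (h0 j))
      (not_isTrunkLike_node hA)
  · have hAj := eq_nil_of_isMax_node ((hG.isMax_iff hq₁ hnb).2 (isMax_leaf ν))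
    obtain ⟨q₂, hq₂, hq₁₂, c, hlc, rfl | ⟨j', hj', h0', rfl⟩⟩ :=
      exists_partner_of_trunk_covBy hA hG hq₁ (hqq₁ htr) (trunk_covBy_leaf η)
        fun h => h.1 (isMax_leaf η).acc
    · exact absurd (((hG.1 q₂ hq₂).eq_iff (hq₁₂ hnb) hlc).2 rfl) leaf_ne_node.symm
    · have hAj' := eq_nil_of_isMax_node ((hG.isMax_iff hq₂ hlc).1 (isMax_leaf η))
      have : Subsingleton {l : List lam // l ∈ A j} :=
        ⟨fun x y => Subtype.ext ((hAj _ x.2).trans (hAj _ y.2).symm)⟩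
      have : Subsingleton {l : List lam // l ∈ A j'} :=
        ⟨fun x y => Subtype.ext ((hAj' _ x.2).trans (hAj' _ y.2).symm)⟩
      exact ⟨j', hj', backForth_of_subsingleton ⟨[], h0 j⟩ ⟨[], h0'⟩ (by simp)⟩
  · exact ⟨j', hj', backForth_of_mem_node_nil hG hq₁ hnb⟩

theorem mem_of_mem_trunk [Nonempty lam] (hA : ∀ i, IsSubtree (A i) ∧ IsSpecial (A i))
    (hApair : ∀ i j, i ≠ j →
      ¬ BackForth (fun a b : {l : List lam // l ∈ A i} => a.1 <+: b.1)
          (fun a b : {l : List lam // l ∈ A j} => a.1 <+: b.1))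
    (hG : IsBFSystem (· ≤ ·) (· ≤ ·) G) (hq : q ∈ G) (htr : (trunk η, trunk ν) ∈ q) {j : lam}
    (hj : j ∈ V η) : j ∈ W ν := by
  obtain ⟨j', hj', hBF⟩ := exists_backForth_of_mem hA hG hq htr hj
  obtain rfl : j = j' := by_contra fun hne => hApair j j' hne hBF
  exact hj'

theorem backForth_of_colBackForth {P Q : lam → Set (List lam)} (h : ColBackForth P Q) :
    BackForth (fun x y : AttachCar lam A (colorSet P) => x ≤ y)
      (fun x y : AttachCar lam A (colorSet Q) => x ≤ y) := by
  obtain ⟨F, hne, hF, hext⟩ := h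
  have hI (p) (hp : p ∈ F) : IsPartialIso (· <+: ·) (· <+: ·) p :=
    ⟨(hF p hp).1, (hF p hp).2.1, (hF p hp).2.2.1⟩
  refine backForth_of_liftSystem hne
    (fun p x y => (base x.1, base y.1) ∈ p ∧ fiber x.1 = fiber y.1)
    (fun p q hpq x y h => ⟨hpq h.1, h.2⟩) ?_ ?_ ?_
  · intro p hp x
    obtain ⟨q, hq, hpq, ⟨ν, hν⟩, -⟩ := hext p hp (base x.1) (base x.1)
    obtain ⟨y, rfl, hxy⟩ :=
      exists_base_fiber_eq (W := colorSet Q) (ν := ν) x fun j => ((hF q hq).2.2.2 _ _ hν j).1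
    exact ⟨q, hq, hpq, y, hν, hxy.symm⟩
  · intro p hp y
    obtain ⟨q, hq, hpq, -, η, hη⟩ := hext p hp (base y.1) (base y.1)
    obtain ⟨x, rfl, hxy⟩ :=
      exists_base_fiber_eq (W := colorSet P) (ν := η) y fun j => ((hF q hq).2.2.2 _ _ hη j).2
    exact ⟨q, hq, hpq, x, hη, hxy⟩
  · rintro p hp x y x' y' ⟨hb, hf⟩ ⟨hb', hf'⟩
    have hbeq := (hI p hp).eq_iff hb hb'
    have hbpre : base x.1 <+: base x'.1 ↔ base y.1 <+: base y'.1 := (hI p hp).rel_iff hb hb'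
    simp only [ext_iff, eq_iff_base_fiber, le_def, attachLe_iff, hbeq, hbpre, hf, hf', and_self]

theorem colBackForth_of_backForth [Nonempty lam] (hA : ∀ i, IsSubtree (A i) ∧ IsSpecial (A i))
    (hApair : ∀ i j, i ≠ j →
      ¬ BackForth (fun a b : {l : List lam // l ∈ A i} => a.1 <+: b.1)
          (fun a b : {l : List lam // l ∈ A j} => a.1 <+: b.1))
    {P Q : lam → Set (List lam)}
    (h : BackForth (fun x y : AttachCar lam A (colorSet P) => x ≤ y)
      (fun x y : AttachCar lam A (colorSet Q) => x ≤ y)) :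
    ColBackForth P Q := by
  obtain ⟨G, ⟨q₀, hq₀⟩, hG⟩ := backForth_iff.1 h
  have trunk_partner {q} (hq : q ∈ G) {a b} (hab : (a, b) ∈ q) :
      (∃ η, a = trunk η) ↔ ∃ ν, b = trunk ν := by
    rw [← isTrunkLike_iff hA, ← isTrunkLike_iff hA, hG.isTrunkLike_iff hq hab]
  refine ⟨liftSystem G fun q η ν => (trunk η, trunk ν) ∈ q, ⟨∅, q₀, hq₀, by simp⟩, ?_,
    hasBackAndForth_liftSystem (fun p q hpq _ _ h => hpq h) ?_ ?_⟩
  · rintro r ⟨q, hq, hr⟩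
    have hI := hG.1 q hq
    have hr' : IsPartialIso (· <+: ·) (· <+: ·) r :=
      isPartialIso_of_forall fun η ν η' ν' h h' => by
        simpa using And.intro (hI.eq_iff (hr _ h) (hr _ h')) (hI.rel_iff (hr _ h) (hr _ h'))
    refine ⟨hr'.1, hr'.2.1, hr'.2.2, fun η ν h j => ⟨fun hj => ?_, fun hj => ?_⟩⟩
    · exact mem_of_mem_trunk hA hApair hG hq (hr _ h) hj
    · exact mem_of_mem_trunk hA hApair hG.swap ⟨q, hq, rfl⟩ (mem_swapPairs.2 (hr _ h)) hj
  · intro q hq η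
    obtain ⟨q', hq', hqq', ⟨b, hb⟩, -⟩ := hG.2 q hq (trunk η) (trunk η)
    obtain ⟨ν, rfl⟩ := (trunk_partner hq' hb).1 ⟨η, rfl⟩
    exact ⟨q', hq', hqq', ν, hb⟩
  · intro q hq ν
    obtain ⟨q', hq', hqq', -, a, ha⟩ := hG.2 q hq (trunk ν) (trunk ν)
    obtain ⟨η, rfl⟩ := (trunk_partner hq' ha).2 ⟨ν, rfl⟩
    exact ⟨q', hq', hqq', η, ha⟩

end Matching

end AttachCar

/-- given a family `(A_i)_{i<λ}` of pairwise non-back-and-forth-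
equivalent special subtrees of `λ^{<ω}`, the map sending a `λ`-colored tree
`M = (λ^{<ω}, ⊴, (P_j)_{j<λ})` to the attached tree `f(M) = T₀*(S_{V_M(η)} : η ∈ T₀)`
satisfies: (i) `f(M)` is isomorphic (as a partial order) to a subtree of `λ^{<ω}`;
and (ii) `M ≡∞ℵ₀ N` iff `f(M) ≡∞ℵ₀ f(N)` (as orders alone). -/
theorem colored_to_subtree (lam : Type) [Infinite lam]
    (A : lam → Set (List lam))
    (hA : ∀ i, IsSubtree (A i) ∧ IsSpecial (A i))
    (hApair : ∀ i j, i ≠ j →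
      ¬ BackForth (fun a b : {l : List lam // l ∈ A i} => a.1 <+: b.1)
          (fun a b : {l : List lam // l ∈ A j} => a.1 <+: b.1)) :
    (∀ P : lam → Set (List lam),
      ∃ T : Set (List lam), IsSubtree T ∧
        ∃ e : AttachCar lam A (colorSet P) ≃ {l : List lam // l ∈ T},
          ∀ x y : AttachCar lam A (colorSet P),
            AttachLe x.1 y.1 ↔ (e x).1 <+: (e y).1) ∧
    (∀ P Q : lam → Set (List lam),
      ColBackForth P Q ↔
        BackForth (fun x y : AttachCar lam A (colorSet P) => AttachLe x.1 y.1)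
          (fun x y : AttachCar lam A (colorSet Q) => AttachLe x.1 y.1)) :=
  ⟨fun _ => AttachCar.exists_isSubtree_orderIso fun i => (hA i).1,
    fun _ _ => ⟨AttachCar.backForth_of_colBackForth, AttachCar.colBackForth_of_backForth hA hApair⟩⟩
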